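/- For every α ∈ (0,1), the supremum over z ∈ ℝ of (α·z − f(z)) equals −φ(Φ⁻¹(α)) and is strictly less than 0, where f(z) = z·Φ(z) + φ(z). -/

import Mathlib

/-!
Since `f' = Φ`, the function `z ↦ f z - α z` has derivative `Φ z - α`, which is nonpositive left
of `x = Φ⁻¹(α)` and nonnegative right of it, so `x` is a global minimiser. As `Φ x = α`, the
minimum value is `f x - α x = φ x`, whence the supremum `-φ x < 0`.
-/

open Real MeasureTheory Set

/-- Standard normal density φ(z) = (1/√(2π))·exp(-z²/2). -/
noncomputable def gaussPdf (z : ℝ) : ℝ := (Real.sqrt (2 * Real.pi))⁻¹ * Real.exp (-z ^ 2 / 2)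

/-- Standard normal CDF Φ(z) = ∫_{-∞}^z φ(t) dt. -/
noncomputable def gaussCdf (z : ℝ) : ℝ := ∫ t in Set.Iic z, gaussPdf t

/-- f(z) = z·Φ(z) + φ(z). -/
noncomputable def stdF (z : ℝ) : ℝ := z * gaussCdf z + gaussPdf z

/-- Inverse of the standard normal CDF. -/
noncomputable def gaussCdfInv : ℝ → ℝ := Function.invFun gaussCdf

open Filter ProbabilityTheory

theorem hasDerivAt_integral_Iic {E : Type*} [NormedAddCommGroup E] [NormedSpace ℝ E]
    [CompleteSpace E] {f : ℝ → E} (hf : Continuous f) (hfi : Integrable f) (x : ℝ) :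
    HasDerivAt (fun y => ∫ t in Iic y, f t) (f x) x := by
  have hsplit : ∀ y, ∫ t in Iic y, f t = (∫ t in Iic 0, f t) + ∫ t in (0 : ℝ)..y, f t := fun y => by
    rw [← intervalIntegral.integral_Iic_sub_Iic hfi.integrableOn hfi.integrableOn, add_sub_cancel]
  exact ((hf.integral_hasStrictDerivAt 0 x).hasDerivAt.const_add _).congr_of_eventuallyEq
    (Eventually.of_forall hsplit)

theorem gaussPdf_eq_gaussianPDFReal : gaussPdf = gaussianPDFReal 0 1 := by
  ext z
  simp [gaussPdf, gaussianPDFReal]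

theorem gaussPdf_pos (z : ℝ) : 0 < gaussPdf z := by
  rw [gaussPdf_eq_gaussianPDFReal]
  exact gaussianPDFReal_pos 0 1 z one_ne_zero

theorem gaussCdf_eq_cdf : gaussCdf = cdf (gaussianReal 0 1) := by
  ext z
  rw [cdf_eq_real, measureReal_def, gaussianReal_apply_eq_integral 0 one_ne_zero,
    ENNReal.toReal_ofReal (integral_nonneg (gaussianPDFReal_nonneg 0 1)), gaussCdf,
    gaussPdf_eq_gaussianPDFReal]

theorem hasDerivAt_gaussCdf (x : ℝ) : HasDerivAt gaussCdf (gaussPdf x) x := by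
  refine hasDerivAt_integral_Iic ?_ ?_ x
  · unfold gaussPdf
    fun_prop
  · rw [gaussPdf_eq_gaussianPDFReal]
    exact integrable_gaussianPDFReal 0 1

theorem monotone_gaussCdf : Monotone gaussCdf :=
  gaussCdf_eq_cdf ▸ (cdf (gaussianReal 0 1)).mono

theorem gaussCdf_gaussCdfInv {α : ℝ} (hα : α ∈ Ioo (0 : ℝ) 1) : gaussCdf (gaussCdfInv α) = α := by
  refine Function.invFun_eq (mem_range_of_exists_le_of_exists_ge
    (continuous_iff_continuousAt.2 fun x => (hasDerivAt_gaussCdf x).continuousAt) ?_ ?_)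
  · rw [gaussCdf_eq_cdf]
    exact ((tendsto_cdf_atBot _).eventually_le_const hα.1).exists
  · rw [gaussCdf_eq_cdf]
    exact ((tendsto_cdf_atTop _).eventually_const_le hα.2).exists

theorem hasDerivAt_gaussPdf (x : ℝ) : HasDerivAt gaussPdf (-x * gaussPdf x) x := by
  have hexp : HasDerivAt (fun z : ℝ => -z ^ 2 / 2) (-x) x :=
    ((hasDerivAt_pow 2 x).neg.div_const 2).congr_deriv (by ring)
  exact (hexp.exp.const_mul _).congr_deriv (by unfold gaussPdf; ring)

theorem hasDerivAt_stdF (x : ℝ) : HasDerivAt stdF (gaussCdf x) x := by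
  have h := ((hasDerivAt_id x).mul (hasDerivAt_gaussCdf x)).add (hasDerivAt_gaussPdf x)
  exact h.congr_deriv (by simp only [id_eq, one_mul]; ring)

theorem isMinOn_stdF_sub_mul (x : ℝ) :
    IsMinOn (fun z => stdF z - gaussCdf x * z) univ x := by
  have hderiv (z : ℝ) : HasDerivAt (fun z => stdF z - gaussCdf x * z) (gaussCdf z - gaussCdf x) z :=
    (hasDerivAt_stdF z).sub (by simpa using (hasDerivAt_id z).const_mul (gaussCdf x))
  refine isMinOn_univ_of_deriv (hderiv x).continuousAt
    (fun z _ => (hderiv z).differentiableAt.differentiableWithinAt)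
    (fun z _ => (hderiv z).differentiableAt.differentiableWithinAt) ?_ ?_
  · intro z hz
    rw [(hderiv z).deriv, sub_nonpos]
    exact monotone_gaussCdf hz.le
  · intro z hz
    rw [(hderiv z).deriv, sub_nonneg]
    exact monotone_gaussCdf hz.le

theorem stmt_12 (α : ℝ) (hα : α ∈ Set.Ioo (0 : ℝ) 1) :
    IsLUB (Set.range fun z : ℝ => α * z - stdF z) (-(gaussPdf (gaussCdfInv α))) ∧
    -(gaussPdf (gaussCdfInv α)) < 0 := by
  set x := gaussCdfInv α
  have hx : gaussCdf x = α := gaussCdf_gaussCdfInv hα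
  have hvalue : α * x - stdF x = -gaussPdf x := by rw [stdF, hx]; ring
  refine ⟨IsGreatest.isLUB ⟨⟨x, hvalue⟩, ?_⟩, neg_lt_zero.2 (gaussPdf_pos x)⟩
  rintro _ ⟨z, rfl⟩
  have hmin : stdF x - α * x ≤ stdF z - α * z := hx ▸ isMinOn_stdF_sub_mul x (mem_univ z)
  linarith
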